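/- Let d ≥ 3, r > 0, y ∈ ℝ^d, let Q = Q_r(y) := y + [−r, r]^d, and let V : Q → [0, ∞) be Lebesgue measurable. Define Y(x, s) := √(V(x)) · |x − s|^{2−d} · √(V(s)) for x, s ∈ Q with x ≠ s. Then for every t > 0: the function G(s) := Y(·, s)⋆(t; Q) (the nonincreasing rearrangement in the first variable with respect to Lebesgue measure on Q, at level t) is measurable in s, and its rearrangement satisfies (Y⋆)⋆(t; Q) := G⋆(t; Q) ≥ (2r√d)^{2−d} · V⋆(t; Q). -/

import Mathlib

open MeasureTheory

/-- The nonincreasing rearrangement of a nonnegative function `f` with respect to a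
measure `μ`: `f⋆(t; X; μ) := sup {s > 0 : μ {x : f x ≥ s} ≥ t}`, with `sup ∅ = 0`. -/
noncomputable def rearr {X : Type*} [MeasurableSpace X] (μ : Measure X)
    (f : X → ℝ) (t : ℝ) : ℝ :=
  sSup {s : ℝ | 0 < s ∧ ENNReal.ofReal t ≤ μ {x | s ≤ f x}}

/-- The closed cube `Q_r(y) = y + [-r, r]^d` of side `2r` centered at `y`. -/
def cube {d : ℕ} (r : ℝ) (y : EuclideanSpace ℝ (Fin d)) : Set (EuclideanSpace ℝ (Fin d)) :=
  {x | ∀ i, |x i - y i| ≤ r}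

/-!
On the cube the kernel `|x - s|^(2-d)` is at least `c = (2r√d)^(2-d)`, the same power of the
diameter, so `V x ≥ a` and `V s ≥ a` give `Y(x, s) ≥ c a`. Hence for every `s` with `V s ≥ a` the
superlevel set `{Y(·, s) ≥ c a}` contains `{V ≥ a}` up to the null set `{s}`, so `G s ≥ c a`
whenever `|{V ≥ a}| ≥ t`, and the superlevel sets of `G` dominate those of `V`. `G` is measurable
because the supremum defining the rearrangement may be taken over rational levels, and the
measure of each superlevel set of `Y(·, s)` depends measurably on `s` by Tonelli.
-/

open Filter Topology

section Rearrangement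

variable {X : Type*} [MeasurableSpace X] {μ : Measure X} {f : X → ℝ} {t : ℝ}

lemma rearr_nonneg (μ : Measure X) (f : X → ℝ) (t : ℝ) : 0 ≤ rearr μ f t :=
  Real.sSup_nonneg fun _ hx => hx.1.le

lemma bddAbove_rearr_set [IsFiniteMeasure μ] (hf : Measurable f) (ht : 0 < t) :
    BddAbove {a : ℝ | 0 < a ∧ ENNReal.ofReal t ≤ μ {x | a ≤ f x}} := by
  have hlim : Tendsto (fun a : ℝ => μ {x | a ≤ f x}) atTop (𝓝 0) := by
    have h := tendsto_measure_iInter_atTop (μ := μ) (s := fun a : ℝ => {x | a ≤ f x})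
      (fun a => (hf measurableSet_Ici).nullMeasurableSet)
      (fun a b hab x hx => hab.trans hx) ⟨0, measure_ne_top μ _⟩
    have hempty : ⋂ a : ℝ, {x | a ≤ f x} = ∅ :=
      Set.eq_empty_of_forall_notMem fun x hx =>
        (lt_add_one (f x)).not_ge (Set.mem_iInter.mp hx (f x + 1))
    rwa [hempty, measure_empty] at h
  obtain ⟨b, hb⟩ := (hlim.eventually (gt_mem_nhds (ENNReal.ofReal_pos.mpr ht))).exists
  refine ⟨b, fun a ha => le_of_not_gt fun hba => ?_⟩
  exact (ha.2.trans (measure_mono fun x hx => hba.le.trans hx)).not_gt hb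

lemma le_rearr [IsFiniteMeasure μ] (hf : Measurable f) (ht : 0 < t) {a : ℝ} (ha : 0 < a)
    (h : ENNReal.ofReal t ≤ μ {x | a ≤ f x}) : a ≤ rearr μ f t :=
  le_csSup (bddAbove_rearr_set hf ht) ⟨ha, h⟩

lemma rearr_le {b : ℝ} (hb : 0 ≤ b)
    (h : ∀ a, 0 < a → ENNReal.ofReal t ≤ μ {x | a ≤ f x} → a ≤ b) : rearr μ f t ≤ b :=
  Real.sSup_le (fun _ hx => h _ hx.1 hx.2) hb

lemma rearr_eq_iSup_rat [IsFiniteMeasure μ] (hf : Measurable f) (ht : 0 < t) :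
    rearr μ f t = ⨆ q : ℚ,
      if 0 < (q : ℝ) ∧ ENNReal.ofReal t ≤ μ {x | (q : ℝ) ≤ f x} then (q : ℝ) else 0 := by
  have hle : ∀ q : ℚ, (if 0 < (q : ℝ) ∧ ENNReal.ofReal t ≤ μ {x | (q : ℝ) ≤ f x}
      then (q : ℝ) else 0) ≤ rearr μ f t := fun q => by
    split_ifs with hq
    · exact le_rearr hf ht hq.1 hq.2
    · exact rearr_nonneg μ f t
  refine le_antisymm ?_ (ciSup_le hle)
  refine rearr_le (le_ciSup_of_le ⟨_, Set.forall_mem_range.2 hle⟩ 0 (by simp))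
    fun a ha hμa => le_of_forall_lt fun b hb => ?_
  obtain ⟨q, hbq, hqa⟩ := exists_rat_btwn (max_lt hb ha)
  have hq : 0 < (q : ℝ) ∧ ENNReal.ofReal t ≤ μ {x | (q : ℝ) ≤ f x} :=
    ⟨(le_max_right b 0).trans_lt hbq, hμa.trans (measure_mono fun x hx => hqa.le.trans hx)⟩
  calc b < q := (le_max_left b 0).trans_lt hbq
    _ ≤ _ := le_ciSup_of_le ⟨_, Set.forall_mem_range.2 hle⟩ q (by rw [if_pos hq])

lemma measurable_rearr {α : Type*} [MeasurableSpace α] [IsFiniteMeasure μ] {F : α → X → ℝ}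
    (hF : Measurable (Function.uncurry F)) (ht : 0 < t) :
    Measurable fun s => rearr μ (F s) t := by
  have hFs : ∀ s, Measurable (F s) := fun s => hF.comp measurable_prodMk_left
  simp_rw [rearr_eq_iSup_rat (hFs _) ht]
  refine Measurable.iSup fun q => Measurable.ite ?_ measurable_const measurable_const
  exact (MeasurableSet.const _).inter <| measurable_measure_prodMk_left
    (measurableSet_le measurable_const hF) measurableSet_Ici

lemma mul_rearr_le_rearr {ν : Measure X} [IsFiniteMeasure ν] {g : X → ℝ} (hg : Measurable g)
    (ht : 0 < t) {c : ℝ} (hc : 0 < c)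
    (h : ∀ a, 0 < a → ENNReal.ofReal t ≤ μ {x | a ≤ f x} →
      ENNReal.ofReal t ≤ ν {x | c * a ≤ g x}) :
    c * rearr μ f t ≤ rearr ν g t := by
  rw [mul_comm, ← le_div_iff₀ hc]
  refine rearr_le (div_nonneg (rearr_nonneg ν g t) hc.le) fun a ha hμa => ?_
  rw [le_div_iff₀ hc, mul_comm]
  exact le_rearr hg ht (mul_pos hc ha) (h a ha hμa)

end Rearrangement

lemma mul_le_sqrt_mul_mul_sqrt {a c k u v : ℝ} (ha : 0 ≤ a) (hc : 0 ≤ c) (hck : c ≤ k)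
    (hu : a ≤ u) (hv : a ≤ v) : c * a ≤ Real.sqrt u * k * Real.sqrt v := by
  have hsu := Real.sqrt_le_sqrt hu
  have hsv := Real.sqrt_le_sqrt hv
  calc c * a = Real.sqrt a * c * Real.sqrt a := by
        rw [mul_comm (Real.sqrt a) c, mul_assoc, Real.mul_self_sqrt ha]
    _ ≤ Real.sqrt u * k * Real.sqrt v := by
        gcongr
        exact mul_nonneg (Real.sqrt_nonneg u) (hc.trans hck)

section Cube

variable {d : ℕ} {r : ℝ} {y x s : EuclideanSpace ℝ (Fin d)}

lemma isClosed_cube (r : ℝ) (y : EuclideanSpace ℝ (Fin d)) : IsClosed (cube r y) := by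
  simp only [cube, Set.ofPred_forall]
  exact isClosed_iInter fun i => isClosed_le (by fun_prop) continuous_const

lemma dist_le_of_mem_cube (hr : 0 ≤ r) (hx : x ∈ cube r y) : dist x y ≤ r * Real.sqrt d := by
  rw [EuclideanSpace.dist_eq]
  calc Real.sqrt (∑ i, dist (x i) (y i) ^ 2) ≤ Real.sqrt (∑ _i : Fin d, r ^ 2) := by
        gcongr with i
        exact hx i
    _ = r * Real.sqrt d := by
        rw [Finset.sum_const, Finset.card_univ, Fintype.card_fin, nsmul_eq_mul,
          Real.sqrt_mul (Nat.cast_nonneg d), Real.sqrt_sq hr, mul_comm]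

lemma norm_sub_le_of_mem_cube (hr : 0 ≤ r) (hx : x ∈ cube r y) (hs : s ∈ cube r y) :
    ‖x - s‖ ≤ 2 * r * Real.sqrt d := by
  rw [← dist_eq_norm]
  calc dist x s ≤ dist x y + dist s y := dist_triangle_right x s y
    _ ≤ r * Real.sqrt d + r * Real.sqrt d :=
        add_le_add (dist_le_of_mem_cube hr hx) (dist_le_of_mem_cube hr hs)
    _ = 2 * r * Real.sqrt d := by ring

lemma volume_cube_lt_top (hr : 0 ≤ r) (y : EuclideanSpace ℝ (Fin d)) :
    volume (cube r y) < ⊤ :=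
  (measure_mono fun _ hx => Metric.mem_closedBall.mpr (dist_le_of_mem_cube hr hx)).trans_lt
    measure_closedBall_lt_top

end Cube

theorem stmt15_general {d : ℕ} (hd : 3 ≤ d) (r : ℝ) (hr : 0 < r)
    (y : EuclideanSpace ℝ (Fin d)) (V : EuclideanSpace ℝ (Fin d) → ℝ)
    (hV : Measurable V) (t : ℝ) (ht : 0 < t) :
    Measurable (fun s => rearr (volume.restrict (cube r y))
        (fun x => Real.sqrt (V x) * ‖x - s‖ ^ ((2 : ℝ) - d) * Real.sqrt (V s)) t) ∧
    (2 * r * Real.sqrt d) ^ ((2 : ℝ) - d) * rearr (volume.restrict (cube r y)) V t ≤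
      rearr (volume.restrict (cube r y))
        (fun s => rearr (volume.restrict (cube r y))
          (fun x => Real.sqrt (V x) * ‖x - s‖ ^ ((2 : ℝ) - d) * Real.sqrt (V s)) t) t := by
  set μ := volume.restrict (cube r y)
  have : IsFiniteMeasure μ := isFiniteMeasure_restrict.mpr (volume_cube_lt_top hr.le y).ne
  have : NeZero d := ⟨by omega⟩
  have hexp : (2 : ℝ) - d ≤ 0 := by
    have : (3 : ℝ) ≤ d := by exact_mod_cast hd
    linarith
  have hQ : MeasurableSet (cube r y) := (isClosed_cube r y).measurableSet
  have hY : Measurable (Function.uncurry fun s x : EuclideanSpace ℝ (Fin d) =>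
      Real.sqrt (V x) * ‖x - s‖ ^ ((2 : ℝ) - d) * Real.sqrt (V s)) := by fun_prop
  have hG := measurable_rearr (μ := μ) hY ht
  refine ⟨hG, mul_rearr_le_rearr hG ht (by positivity) fun a ha hVa => ?_⟩
  have hY_ge : ∀ s ∈ cube r y, a ≤ V s → (2 * r * Real.sqrt d) ^ ((2 : ℝ) - d) * a ≤
      rearr μ (fun x => Real.sqrt (V x) * ‖x - s‖ ^ ((2 : ℝ) - d) * Real.sqrt (V s)) t := by
    intro s hs hVs
    refine le_rearr (hY.comp measurable_prodMk_left) ht (by positivity) (hVa.trans ?_)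
    refine measure_mono_ae ?_
    filter_upwards [ae_restrict_mem hQ, ae_restrict_of_ae (volume.ae_ne s)] with x hx hxs hVx
    refine mul_le_sqrt_mul_mul_sqrt ha.le (by positivity) ?_ hVx hVs
    exact Real.rpow_le_rpow_of_nonpos (norm_pos_iff.mpr (sub_ne_zero.mpr hxs))
      (norm_sub_le_of_mem_cube hr.le hx hs) hexp
  calc ENNReal.ofReal t ≤ μ {x | a ≤ V x} := hVa
    _ ≤ _ := measure_mono_ae <| (ae_restrict_mem hQ).mono fun s hs hVs => hY_ge s hs hVs

theorem stmt15 {d : ℕ} (hd : 3 ≤ d) (r : ℝ) (hr : 0 < r)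
    (y : EuclideanSpace ℝ (Fin d)) (V : EuclideanSpace ℝ (Fin d) → ℝ)
    (hV : Measurable V) (hV0 : ∀ x, 0 ≤ V x) (t : ℝ) (ht : 0 < t) :
    Measurable (fun s => rearr (volume.restrict (cube r y))
        (fun x => Real.sqrt (V x) * ‖x - s‖ ^ ((2 : ℝ) - d) * Real.sqrt (V s)) t) ∧
    (2 * r * Real.sqrt d) ^ ((2 : ℝ) - d) * rearr (volume.restrict (cube r y)) V t ≤
      rearr (volume.restrict (cube r y))
        (fun s => rearr (volume.restrict (cube r y))
          (fun x => Real.sqrt (V x) * ‖x - s‖ ^ ((2 : ℝ) - d) * Real.sqrt (V s)) t) t :=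
  stmt15_general hd r hr y V hV t ht
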